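/- arXiv:1003.3402 — 3 statements merged into one kernel-verified Lean document; each statement's English description precedes it below -/
import Mathlib

section
/- Let m, Q ∈ ℝ, let A(r) = r²(1 − 2mr + Q²r²), and let Θ : ℝ × ℝ → ℝ be smooth (infinitely differentiable), satisfying the wave equation 2·∂ᵥ∂ᵣΘ(v,r) = ∂ᵣ( A(r)·∂ᵣΘ(v,r) ) − 2(mr − Q²r²)·Θ(v,r) for all (v,r), together with the boundary conditions Θ(v,0) = 1 for all v and Θ(0,r) = 1 for all r. If there exists T > 0 such that Θ(v + T, r) = Θ(v, r) for all v, r, then m = 0. -/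
lemma hasDerivAt_snd_slice (F : ℝ × ℝ → ℝ) (hF : Differentiable ℝ F) (v r : ℝ) :
    HasDerivAt (fun r' => F (v, r')) (fderiv ℝ F (v, r) (0, 1)) r := by
  have hc : HasDerivAt (fun r' : ℝ => ((v, r') : ℝ × ℝ)) ((0 : ℝ), (1 : ℝ)) r :=
    (hasDerivAt_const r v).prodMk (hasDerivAt_id r)
  exact (hF (v, r)).hasFDerivAt.comp_hasDerivAt r hc

lemma hasDerivAt_fst_slice (F : ℝ × ℝ → ℝ) (hF : Differentiable ℝ F) (v r : ℝ) :
    HasDerivAt (fun v' => F (v', r)) (fderiv ℝ F (v, r) (1, 0)) v := by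
  have hc : HasDerivAt (fun v' : ℝ => ((v', r) : ℝ × ℝ)) ((1 : ℝ), (0 : ℝ)) v :=
    (hasDerivAt_id v).prodMk (hasDerivAt_const v r)
  exact (hF (v, r)).hasFDerivAt.comp_hasDerivAt v hc


/-- Appendix C (angle-independent case): a smooth solution `Θ` of the
characteristic wave equation
`2 ∂ᵥ∂ᵣΘ = ∂ᵣ(A ∂ᵣΘ) − 2(mr − Q²r²)Θ`, with `A(r) = r²(1 − 2mr + Q²r²)`,
satisfying `Θ(v,0) = 1` and `Θ(0,r) = 1`, can be periodic in `v` only if `m = 0`. -/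
theorem gibbons_stewart_gauge_periodic_only_if_massless (m Q : ℝ) (Θ : ℝ → ℝ → ℝ)
    (hsmooth : ContDiff ℝ (⊤ : ℕ∞) (fun p : ℝ × ℝ => Θ p.1 p.2))
    (hpde : ∀ v r : ℝ,
      2 * deriv (fun v' : ℝ => deriv (fun r' : ℝ => Θ v' r') r) v =
        deriv (fun r' : ℝ =>
          (r' ^ 2 * (1 - 2 * m * r' + Q ^ 2 * r' ^ 2)) * deriv (fun s : ℝ => Θ v s) r') r
        - 2 * (m * r - Q ^ 2 * r ^ 2) * Θ v r)
    (hbc1 : ∀ v : ℝ, Θ v 0 = 1) (hbc2 : ∀ r : ℝ, Θ 0 r = 1)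
    (hper : ∃ T : ℝ, 0 < T ∧ ∀ v r : ℝ, Θ (v + T) r = Θ v r) :
    m = 0 := by
  obtain ⟨T, hT, hperiod⟩ := hper
  set F : ℝ × ℝ → ℝ := fun p => Θ p.1 p.2 with hFdef
  have hF : ContDiff ℝ (⊤ : ℕ∞) F := hsmooth
  have hFd : Differentiable ℝ F := hF.differentiable (by simp)
  set k : ℝ × ℝ → ℝ := fun p => fderiv ℝ F p (0, 1) with hkdef
  have hk : ContDiff ℝ (⊤ : ℕ∞) k :=
    (hF.fderiv_right (by simp)).clm_apply contDiff_const
  have hkd : Differentiable ℝ k := hk.differentiable (by simp)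
  have hkr : ∀ v r : ℝ, deriv (fun r' : ℝ => Θ v r') r = k (v, r) := fun v r =>
    (hasDerivAt_snd_slice F hFd v r).deriv
  set k1 : ℝ × ℝ → ℝ := fun p => fderiv ℝ k p (1, 0) with hk1def
  set k2 : ℝ × ℝ → ℝ := fun p => fderiv ℝ k p (0, 1) with hk2def
  have hk1 : ContDiff ℝ (⊤ : ℕ∞) k1 := (hk.fderiv_right (by simp)).clm_apply contDiff_const
  have hk2 : ContDiff ℝ (⊤ : ℕ∞) k2 := (hk.fderiv_right (by simp)).clm_apply contDiff_const
  have hk1d : Differentiable ℝ k1 := hk1.differentiable (by simp)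
  have hk2d : Differentiable ℝ k2 := hk2.differentiable (by simp)
  -- rewrite the PDE in terms of k and k1
  have hpde' : ∀ v r : ℝ,
      2 * k1 (v, r) =
        deriv (fun r' : ℝ =>
          (r' ^ 2 * (1 - 2 * m * r' + Q ^ 2 * r' ^ 2)) * k (v, r')) r
        - 2 * (m * r - Q ^ 2 * r ^ 2) * Θ v r := by
    intro v r
    have h1 : (fun v' : ℝ => deriv (fun r' : ℝ => Θ v' r') r) = fun v' => k (v', r) := by
      funext v'; exact hkr v' r
    have h2 : deriv (fun v' => k (v', r)) v = k1 (v, r) :=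
      (hasDerivAt_fst_slice k hkd v r).deriv
    have h3 : (fun r' : ℝ =>
        (r' ^ 2 * (1 - 2 * m * r' + Q ^ 2 * r' ^ 2)) * deriv (fun s : ℝ => Θ v s) r')
        = fun r' => (r' ^ 2 * (1 - 2 * m * r' + Q ^ 2 * r' ^ 2)) * k (v, r') := by
      funext r'; rw [hkr v r']
    have := hpde v r
    rw [h1, h2, h3] at this
    exact this
  have hψC : ∀ v : ℝ,
      ContDiff ℝ (⊤ : ℕ∞) (fun r' : ℝ => (1 - 2 * m * r' + Q ^ 2 * r' ^ 2) * k (v, r')) := by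
    intro v
    have hcurve : ContDiff ℝ (⊤ : ℕ∞) (fun r' : ℝ => ((v, r') : ℝ × ℝ)) :=
      contDiff_const.prodMk contDiff_id
    exact (((contDiff_const.sub (contDiff_const.mul contDiff_id)).add
      (contDiff_const.mul (contDiff_id.pow 2)))).mul (hk.comp hcurve)
  -- derivative of the "A·Θ_r" term, as a function of r
  have hAterm : ∀ v r : ℝ,
      deriv (fun r' : ℝ => (r' ^ 2 * (1 - 2 * m * r' + Q ^ 2 * r' ^ 2)) * k (v, r')) r
        = 2 * r * ((1 - 2 * m * r + Q ^ 2 * r ^ 2) * k (v, r))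
          + r ^ 2 * deriv (fun r' : ℝ => (1 - 2 * m * r' + Q ^ 2 * r' ^ 2) * k (v, r')) r := by
    intro v r
    set ψ : ℝ → ℝ := fun r' => (1 - 2 * m * r' + Q ^ 2 * r' ^ 2) * k (v, r') with hψdef
    have hψd : Differentiable ℝ ψ := (hψC v).differentiable (by simp)
    have heq : (fun r' : ℝ => (r' ^ 2 * (1 - 2 * m * r' + Q ^ 2 * r' ^ 2)) * k (v, r'))
        = fun r' => r' ^ 2 * ψ r' := by
      funext r'; simp only [hψdef]; ring
    rw [heq]
    have h : HasDerivAt (fun r' : ℝ => r' ^ 2 * ψ r') _ r := (hasDerivAt_pow 2 r).mul (hψd r).hasDerivAt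
    rw [h.deriv]
    ring
  -- Step: k1 (v, 0) = 0
  have hk1v0 : ∀ v : ℝ, k1 (v, 0) = 0 := by
    intro v
    have h := hpde' v 0
    rw [hAterm v 0] at h
    simp at h
    linarith [h]
  -- Step: k (v, 0) = 0
  have hkv0 : ∀ v : ℝ, k (v, 0) = 0 := by
    have hc : ∀ v : ℝ, HasDerivAt (fun v' => k (v', 0)) 0 v := by
      intro v
      have := hasDerivAt_fst_slice k hkd v 0
      rwa [show fderiv ℝ k (v, 0) (1, 0) = 0 from hk1v0 v] at this
    intro v
    have hcd : Differentiable ℝ (fun v' => k (v', 0)) := fun v' => (hc v').differentiableAt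
    have hconst : k (v, 0) = k (0, 0) :=
      is_const_of_deriv_eq_zero hcd (fun x => (hc x).deriv) v 0
    have hk00 : k (0, 0) = 0 := by
      have h1 : deriv (fun r' : ℝ => Θ 0 r') 0 = k (0, 0) := hkr 0 0
      have h2 : (fun r' : ℝ => Θ 0 r') = fun _ => (1 : ℝ) := funext hbc2
      rw [h2, deriv_const] at h1
      exact h1.symm
    rw [hconst, hk00]
  -- Step B : fderiv ℝ k1 (v,0) (0,1) = -m
  have hstepB : ∀ v : ℝ, fderiv ℝ k1 (v, 0) (0, 1) = -m := by
    intro v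
    set ψ : ℝ → ℝ := fun r' => (1 - 2 * m * r' + Q ^ 2 * r' ^ 2) * k (v, r') with hψdef
    have hψC' := hψC v
    have hψd : Differentiable ℝ ψ := hψC'.differentiable (by simp)
    have hψ'C : ContDiff ℝ (⊤ : ℕ∞) (deriv ψ) := by
      have h1 : ContDiff ℝ (⊤ : ℕ∞) (fun r => fderiv ℝ ψ r 1) :=
        (hψC'.fderiv_right (by simp)).clm_apply contDiff_const
      have h2 : deriv ψ = fun r => fderiv ℝ ψ r 1 := by
        funext r; rw [← fderiv_apply_one_eq_deriv]
      rw [h2]; exact h1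
    have hψ'd : Differentiable ℝ (deriv ψ) := hψ'C.differentiable (by simp)
    -- HasDerivAt of part 1 : r ↦ 2 r ψ r + r² (deriv ψ) r   at 0, derivative 2 ψ 0 = 0
    have hpart1 : HasDerivAt
        (fun r : ℝ => 2 * r * ψ r + r ^ 2 * deriv ψ r) 0 0 := by
      have ha : HasDerivAt (fun r : ℝ => 2 * r * ψ r)
          (2 * ψ 0 + 2 * 0 * deriv ψ 0) 0 := by
        have : HasDerivAt (fun r : ℝ => 2 * r * ψ r) _ 0 := ((hasDerivAt_id (0 : ℝ)).const_mul 2).mul (hψd 0).hasDerivAt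
        simpa using this
      have hb : HasDerivAt (fun r : ℝ => r ^ 2 * deriv ψ r)
          (2 * 0 ^ 1 * deriv ψ 0 + 0 ^ 2 * deriv (deriv ψ) 0) 0 :=
        (hasDerivAt_pow 2 0).mul (hψ'd 0).hasDerivAt
      have h := ha.add hb
      have hψ0 : ψ 0 = 0 := by simp [hψdef, hkv0 v]
      have : (2 * ψ 0 + 2 * 0 * deriv ψ 0) + (2 * 0 ^ 1 * deriv ψ 0 + 0 ^ 2 * deriv (deriv ψ) 0)
          = 0 := by rw [hψ0]; ring
      rwa [this] at h
    -- HasDerivAt of part 2 : r ↦ 2(mr - Q²r²) Θ v r at 0, derivative 2m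
    have hpart2 : HasDerivAt (fun r : ℝ => 2 * (m * r - Q ^ 2 * r ^ 2) * Θ v r) (2 * m) 0 := by
      have hpoly : HasDerivAt (fun r : ℝ => 2 * (m * r - Q ^ 2 * r ^ 2))
          (2 * (m * 1 - Q ^ 2 * (2 * 0 ^ 1))) 0 := by
        exact (((hasDerivAt_id (0:ℝ)).const_mul m).sub
          ((hasDerivAt_pow 2 0).const_mul (Q ^ 2))).const_mul 2
      have hΘ : HasDerivAt (fun r : ℝ => Θ v r) (k (v, 0)) 0 := by
        have := hasDerivAt_snd_slice F hFd v 0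
        exact this
      have h := hpoly.mul hΘ
      have hval : 2 * (m * 1 - Q ^ 2 * (2 * 0 ^ 1)) * Θ v 0
          + 2 * (m * 0 - Q ^ 2 * 0 ^ 2) * k (v, 0) = 2 * m := by
        rw [hbc1 v, hkv0 v]; ring
      rwa [hval] at h
    -- the function r ↦ 2 k1 (v, r) equals part1' - part2
    have hfun : (fun r : ℝ => 2 * k1 (v, r))
        = fun r : ℝ => (2 * r * ψ r + r ^ 2 * deriv ψ r)
            - 2 * (m * r - Q ^ 2 * r ^ 2) * Θ v r := by
      funext r
      rw [hpde' v r, hAterm v r]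
    have hRHS : HasDerivAt
        (fun r : ℝ => (2 * r * ψ r + r ^ 2 * deriv ψ r)
            - 2 * (m * r - Q ^ 2 * r ^ 2) * Θ v r) (0 - 2 * m) 0 :=
      hpart1.sub hpart2
    have hLHS : HasDerivAt (fun r : ℝ => 2 * k1 (v, r)) (2 * fderiv ℝ k1 (v, 0) (0, 1)) 0 :=
      (hasDerivAt_snd_slice k1 hk1d v 0).const_mul 2
    rw [hfun] at hLHS
    have := hLHS.unique hRHS
    linarith
  -- Step C : symmetry of second derivatives
  have hstepC : ∀ v : ℝ, fderiv ℝ k2 (v, 0) (1, 0) = fderiv ℝ k1 (v, 0) (0, 1) := by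
    intro v
    have hdk : Differentiable ℝ (fderiv ℝ k) :=
      (hk.fderiv_right (m := 1) (WithTop.coe_le_coe.mpr le_top)).differentiable (by simp)
    have hsymm := second_derivative_symmetric (f := k) (f' := fderiv ℝ k)
      (f'' := fderiv ℝ (fderiv ℝ k) (v, 0))
      (fun y => (hkd y).hasFDerivAt) (hdk (v, 0)).hasFDerivAt
      ((1 : ℝ), (0 : ℝ)) ((0 : ℝ), (1 : ℝ))
    have h2 : fderiv ℝ k2 (v, 0) ((1 : ℝ), (0 : ℝ))
        = fderiv ℝ (fderiv ℝ k) (v, 0) ((1 : ℝ), (0 : ℝ)) ((0 : ℝ), (1 : ℝ)) := by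
      rw [hk2def]
      rw [fderiv_clm_apply (hdk (v, 0)) (differentiableAt_const _)]
      simp
    have h1 : fderiv ℝ k1 (v, 0) ((0 : ℝ), (1 : ℝ))
        = fderiv ℝ (fderiv ℝ k) (v, 0) ((0 : ℝ), (1 : ℝ)) ((1 : ℝ), (0 : ℝ)) := by
      rw [hk1def]
      rw [fderiv_clm_apply (hdk (v, 0)) (differentiableAt_const _)]
      simp
    rw [h1, h2, hsymm]
  -- Step D : H v := k2 (v,0) has derivative -m everywhere
  have hH : ∀ v : ℝ, HasDerivAt (fun v' => k2 (v', 0)) (-m) v := by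
    intro v
    have := hasDerivAt_fst_slice k2 hk2d v 0
    rwa [hstepC v, hstepB v] at this
  -- H is periodic
  have hHper : (fun v' => k2 (v', 0)) T = (fun v' => k2 (v', 0)) 0 := by
    have hkper : ∀ r : ℝ, k (T, r) = k (0, r) := by
      intro r
      rw [← hkr T r, ← hkr 0 r]
      have : (fun r' : ℝ => Θ T r') = fun r' : ℝ => Θ 0 r' := by
        funext r'
        have := hperiod 0 r'
        rwa [zero_add] at this
      rw [this]
    have h1 : k2 (T, 0) = deriv (fun r => k (T, r)) 0 := ((hasDerivAt_snd_slice k hkd T 0).deriv).symm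
    have h2 : k2 (0, 0) = deriv (fun r => k (0, r)) 0 := ((hasDerivAt_snd_slice k hkd 0 0).deriv).symm
    simp only []
    rw [h1, h2]
    congr 1
    funext r
    exact hkper r
  -- conclude
  have hg : ∀ v : ℝ, HasDerivAt (fun v' => k2 (v', 0) + m * v') 0 v := by
    intro v
    have : HasDerivAt (fun v' => k2 (v', 0) + m * v') _ v := (hH v).add ((hasDerivAt_id v).const_mul m)
    simpa using this
  have hgd : Differentiable ℝ (fun v' => k2 (v', 0) + m * v') := fun v => (hg v).differentiableAt
  have hconst : (fun v' => k2 (v', 0) + m * v') T = (fun v' => k2 (v', 0) + m * v') 0 :=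
    is_const_of_deriv_eq_zero hgd (fun x => (hg x).deriv) T 0
  simp only [] at hconst hHper
  have : m * T = 0 := by
    have := hconst
    rw [hHper] at this
    linarith
  rcases mul_eq_zero.mp this with h | h
  · exact h
  · exact absurd h (ne_of_gt hT)
end

section
/- Let m, Q ∈ ℝ, let A(r) = r²(1 − 2mr + Q²r²), and let Θ : ℝ × ℝ → ℝ be smooth (infinitely differentiable), satisfying 2·∂ᵥ∂ᵣΘ(v,r) = ∂ᵣ( A(r)·∂ᵣΘ(v,r) ) − 2(mr − Q²r²)·Θ(v,r) for all (v,r), with Θ(v,0) = 1 for all v and Θ(0,r) = 1 for all r. Then for every v ∈ ℝ: (i) ∂ᵣΘ(v,0) = 0, and (ii) ∂ᵥ(∂ᵣ²Θ)(v,0) = −m. -/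
private lemma aux_hasDerivAt_snd {f : ℝ × ℝ → ℝ} (hf : ContDiff ℝ (⊤ : ℕ∞) f) (a b : ℝ) :
    HasDerivAt (fun s => f (a, s)) (fderiv ℝ f (a, b) (0, 1)) b :=
  (hf.differentiable (by simp) (a, b)).hasFDerivAt.comp_hasDerivAt b
    (HasDerivAt.prodMk (hasDerivAt_const b a) (hasDerivAt_id b))

private lemma aux_hasDerivAt_fst {f : ℝ × ℝ → ℝ} (hf : ContDiff ℝ (⊤ : ℕ∞) f) (a b : ℝ) :
    HasDerivAt (fun t => f (t, b)) (fderiv ℝ f (a, b) (1, 0)) a :=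
  (hf.differentiable (by simp) (a, b)).hasFDerivAt.comp_hasDerivAt a
    (HasDerivAt.prodMk (hasDerivAt_id a) (hasDerivAt_const a b))

private lemma aux_fderiv_apply_smooth {f : ℝ × ℝ → ℝ} (hf : ContDiff ℝ (⊤ : ℕ∞) f) (z : ℝ × ℝ) :
    ContDiff ℝ (⊤ : ℕ∞) (fun p => fderiv ℝ f p z) :=
  (hf.fderiv_right (by simp)).clm_apply contDiff_const

/-- Appendix C, computational core: for a smooth solution `Θ` of the
characteristic wave equation
`2 ∂ᵥ∂ᵣΘ = ∂ᵣ(A ∂ᵣΘ) − 2(mr − Q²r²)Θ`, with `A(r) = r²(1 − 2mr + Q²r²)`,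
satisfying `Θ(v,0) = 1` and `Θ(0,r) = 1`, one has for every `v`:
(i) `∂ᵣΘ(v,0) = 0` and (ii) `∂ᵥ(∂ᵣ²Θ)(v,0) = −m`. -/
theorem gibbons_stewart_gauge_scri_derivatives (m Q : ℝ) (Θ : ℝ → ℝ → ℝ)
    (hsmooth : ContDiff ℝ (⊤ : ℕ∞) (fun p : ℝ × ℝ => Θ p.1 p.2))
    (hpde : ∀ v r : ℝ,
      2 * deriv (fun v' : ℝ => deriv (fun r' : ℝ => Θ v' r') r) v =
        deriv (fun r' : ℝ =>
          (r' ^ 2 * (1 - 2 * m * r' + Q ^ 2 * r' ^ 2)) * deriv (fun s : ℝ => Θ v s) r') r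
        - 2 * (m * r - Q ^ 2 * r ^ 2) * Θ v r)
    (hbc1 : ∀ v : ℝ, Θ v 0 = 1) (hbc2 : ∀ r : ℝ, Θ 0 r = 1) :
    ∀ v : ℝ,
      deriv (fun r : ℝ => Θ v r) 0 = 0 ∧
      deriv (fun v' : ℝ => deriv (deriv (fun r : ℝ => Θ v' r)) 0) v = -m := by
  classical
  set F : ℝ × ℝ → ℝ := fun p => Θ p.1 p.2 with hFdef
  have hFs : ContDiff ℝ (⊤ : ℕ∞) F := hsmooth
  set u : ℝ × ℝ → ℝ := fun p => fderiv ℝ F p (0, 1) with hudef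
  have hus : ContDiff ℝ (⊤ : ℕ∞) u := aux_fderiv_apply_smooth hFs _
  -- ∂ᵣΘ(a,b) = u (a,b)
  have hDTheta : ∀ a b : ℝ, HasDerivAt (fun s => Θ a s) (u (a, b)) b := fun a b =>
    aux_hasDerivAt_snd hFs a b
  have hu_eq : ∀ a b : ℝ, deriv (fun s => Θ a s) b = u (a, b) := fun a b => (hDTheta a b).deriv
  set u2 : ℝ × ℝ → ℝ := fun p => fderiv ℝ u p (0, 1) with hu2def
  have hu2s : ContDiff ℝ (⊤ : ℕ∞) u2 := aux_fderiv_apply_smooth hus _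
  have hDu : ∀ a b : ℝ, HasDerivAt (fun s => u (a, s)) (u2 (a, b)) b := fun a b =>
    aux_hasDerivAt_snd hus a b
  set u3 : ℝ × ℝ → ℝ := fun p => fderiv ℝ u2 p (0, 1) with hu3def
  have hDu2 : ∀ a b : ℝ, HasDerivAt (fun s => u2 (a, s)) (u3 (a, b)) b := fun a b =>
    aux_hasDerivAt_snd hu2s a b
  set w : ℝ × ℝ → ℝ := fun p => fderiv ℝ u p (1, 0) with hwdef
  have hws : ContDiff ℝ (⊤ : ℕ∞) w := aux_fderiv_apply_smooth hus _
  have hDw : ∀ a b : ℝ, HasDerivAt (fun t => u (t, b)) (w (a, b)) a := fun a b =>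
    aux_hasDerivAt_fst hus a b
  -- derivative of A
  have hA : ∀ r : ℝ, HasDerivAt (fun r' : ℝ => r' ^ 2 * (1 - 2 * m * r' + Q ^ 2 * r' ^ 2))
      (2 * r - 6 * m * r ^ 2 + 4 * Q ^ 2 * r ^ 3) r := by
    intro r
    have h1 : HasDerivAt (fun r' : ℝ => 1 - 2 * m * r' + Q ^ 2 * r' ^ 2)
        (-(2 * m) + Q ^ 2 * (2 * r ^ 1)) r := by
      have := (((hasDerivAt_id r).const_mul (2 * m)).const_sub 1).add
        ((hasDerivAt_pow 2 r).const_mul (Q ^ 2))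
      simpa [Pi.add_def] using this
    have := (hasDerivAt_pow 2 r).mul h1
    exact this.congr_deriv (by norm_num; ring)
  -- derivative of A·u(v,·)
  have hAu : ∀ v r : ℝ,
      HasDerivAt (fun r' : ℝ => (r' ^ 2 * (1 - 2 * m * r' + Q ^ 2 * r' ^ 2)) * u (v, r'))
        ((2 * r - 6 * m * r ^ 2 + 4 * Q ^ 2 * r ^ 3) * u (v, r)
          + (r ^ 2 * (1 - 2 * m * r + Q ^ 2 * r ^ 2)) * u2 (v, r)) r := fun v r =>
    (hA r).mul (hDu v r)
  -- PDE rewritten in terms of u, w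
  have hpde' : ∀ v r : ℝ,
      2 * w (v, r) =
        ((2 * r - 6 * m * r ^ 2 + 4 * Q ^ 2 * r ^ 3) * u (v, r)
          + (r ^ 2 * (1 - 2 * m * r + Q ^ 2 * r ^ 2)) * u2 (v, r))
        - 2 * (m * r - Q ^ 2 * r ^ 2) * Θ v r := by
    intro v r
    have h := hpde v r
    simp only [hu_eq] at h
    rw [(hAu v r).deriv] at h
    rw [(hDw v r).deriv] at h
    exact h
  -- (i): u (v,0) = 0
  have hu0 : ∀ v : ℝ, u (v, 0) = 0 := by
    intro v
    have hconst : ∀ x y : ℝ, u (x, 0) = u (y, 0) := by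
      apply is_const_of_deriv_eq_zero
      · exact (hus.differentiable (by simp)).comp (differentiable_id.prodMk (differentiable_const 0))
      · intro x
        have h := hpde' x 0
        simp only [mul_zero, zero_mul, pow_two, zero_pow, mul_comm] at h
        have hval : w (x, 0) = 0 := by nlinarith [hpde' x 0]
        have : deriv (fun t => u (t, 0)) x = w (x, 0) := (hDw x 0).deriv
        rw [this, hval]
    have h00 : u (0, 0) = 0 := by
      have : (fun s => Θ 0 s) = fun _ => (1 : ℝ) := funext hbc2
      rw [← hu_eq 0 0, this, deriv_const]
    rw [hconst v 0, h00]
  refine fun v => ⟨by rw [hu_eq v 0]; exact hu0 v, ?_⟩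
  -- (ii)
  -- rewrite the goal's inner function
  have hinner : ∀ v' : ℝ, deriv (deriv (fun r : ℝ => Θ v' r)) 0 = u2 (v', 0) := by
    intro v'
    have : deriv (fun r : ℝ => Θ v' r) = fun b => u (v', b) := funext fun b => hu_eq v' b
    rw [this, (hDu v' 0).deriv]
  have hgoal1 : deriv (fun v' : ℝ => deriv (deriv (fun r : ℝ => Θ v' r)) 0) v
      = fderiv ℝ u2 (v, 0) (1, 0) := by
    have : (fun v' : ℝ => deriv (deriv (fun r : ℝ => Θ v' r)) 0) = fun v' => u2 (v', 0) :=
      funext hinner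
    rw [this]
    exact (aux_hasDerivAt_fst hu2s v 0).deriv
  rw [hgoal1]
  -- symmetry of second derivatives of u
  have hfderiv_u_diff : Differentiable ℝ (fderiv ℝ u) :=
    (hus.fderiv_right (m := (⊤ : ℕ∞)) (by simp)).differentiable (by simp)
  have hsymm : ∀ q : ℝ × ℝ, fderiv ℝ (fderiv ℝ u) q (1, 0) (0, 1)
      = fderiv ℝ (fderiv ℝ u) q (0, 1) (1, 0) := by
    intro q
    exact second_derivative_symmetric
      (fun y => (hus.differentiable (by simp) y).hasFDerivAt)
      (hfderiv_u_diff q).hasFDerivAt (1, 0) (0, 1)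
  have hswap : ∀ (z : ℝ × ℝ) (q : ℝ × ℝ),
      fderiv ℝ (fun p => fderiv ℝ u p z) q = (fderiv ℝ (fderiv ℝ u) q).flip z := by
    intro z q
    have := fderiv_clm_apply (hfderiv_u_diff q) (differentiableAt_const z)
    simpa using this
  have hB : fderiv ℝ u2 (v, 0) (1, 0) = fderiv ℝ w (v, 0) (0, 1) := by
    rw [hu2def, hwdef]
    rw [hswap (0, 1) (v, 0), hswap (1, 0) (v, 0)]
    simpa using hsymm (v, 0)
  rw [hB]
  -- evaluate ∂ᵣ w (v, ·) at 0 from the PDE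
  have hW : fderiv ℝ w (v, 0) (0, 1) = deriv (fun r => w (v, r)) 0 :=
    (aux_hasDerivAt_snd hws v 0).deriv.symm
  rw [hW]
  have hwfun : (fun r => w (v, r)) = fun r =>
      (((2 * r - 6 * m * r ^ 2 + 4 * Q ^ 2 * r ^ 3) * u (v, r)
          + (r ^ 2 * (1 - 2 * m * r + Q ^ 2 * r ^ 2)) * u2 (v, r))
        - 2 * (m * r - Q ^ 2 * r ^ 2) * Θ v r) / 2 := by
    funext r
    have := hpde' v r
    linarith
  rw [hwfun]
  -- compute the derivative at 0
  have hA' : HasDerivAt (fun r : ℝ => 2 * r - 6 * m * r ^ 2 + 4 * Q ^ 2 * r ^ 3)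
      (2 - 12 * m * 0 + 12 * Q ^ 2 * 0 ^ 2) 0 := by
    have := (((hasDerivAt_id (0:ℝ)).const_mul 2).sub
      ((hasDerivAt_pow 2 (0:ℝ)).const_mul (6 * m))).add
      ((hasDerivAt_pow 3 (0:ℝ)).const_mul (4 * Q ^ 2))
    exact this.congr_deriv (by norm_num)
  have hB' : HasDerivAt (fun r : ℝ => 2 * (m * r - Q ^ 2 * r ^ 2))
      (2 * (m - Q ^ 2 * (2 * 0))) 0 := by
    have := (((hasDerivAt_id (0:ℝ)).const_mul m).sub
      ((hasDerivAt_pow 2 (0:ℝ)).const_mul (Q ^ 2))).const_mul 2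
    exact this.congr_deriv (by simp)
  have hTheta0 : HasDerivAt (fun r : ℝ => Θ v r) (u (v, 0)) 0 := hDTheta v 0
  have htotal : HasDerivAt (fun r : ℝ =>
      (((2 * r - 6 * m * r ^ 2 + 4 * Q ^ 2 * r ^ 3) * u (v, r)
          + (r ^ 2 * (1 - 2 * m * r + Q ^ 2 * r ^ 2)) * u2 (v, r))
        - 2 * (m * r - Q ^ 2 * r ^ 2) * Θ v r) / 2) (-m) 0 := by
    have h1 := (hA'.mul (hDu v 0)).add ((hA 0).mul (hDu2 v 0))
    have h2 := hB'.mul hTheta0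
    have h3 := (h1.sub h2).div_const 2
    exact h3.congr_deriv (by rw [hu0 v, hbc1 v]; ring)
  exact htotal.deriv
end

section
/- Let η be the Minkowski bilinear form on ℝ⁴, η(x,y) = x₀y₀ − x₁y₁ − x₂y₂ − x₃y₃. Let K : ℝ⁴ → ℝ⁴ be a smooth vector field satisfying the flat-space Killing equation, i.e. for every x, u, w ∈ ℝ⁴, η( (DK)(x)·u , w ) + η( u , (DK)(x)·w ) = 0, where (DK)(x) is the total derivative of K at x. If K is null everywhere, i.e. η(K(x), K(x)) = 0 for all x ∈ ℝ⁴, then K is constant (a null translation). -/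
/-- The Minkowski bilinear form on `ℝ⁴`. -/
def minkowski (x y : Fin 4 → ℝ) : ℝ :=
  x 0 * y 0 - x 1 * y 1 - x 2 * y 2 - x 3 * y 3

lemma mink_comm (x y : Fin 4 → ℝ) : minkowski x y = minkowski y x := by
  simp [minkowski]; ring

lemma mink_zero_right (z : Fin 4 → ℝ) : minkowski z 0 = 0 := by simp [minkowski]

lemma mink_single0 (z : Fin 4 → ℝ) : minkowski z (Pi.single 0 1) = z 0 := by
  simp [minkowski, Pi.single_apply]

lemma mink_single1 (z : Fin 4 → ℝ) : minkowski z (Pi.single 1 1) = -z 1 := by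
  simp [minkowski, Pi.single_apply]

lemma mink_single2 (z : Fin 4 → ℝ) : minkowski z (Pi.single 2 1) = -z 2 := by
  simp [minkowski, Pi.single_apply]

lemma mink_single3 (z : Fin 4 → ℝ) : minkowski z (Pi.single 3 1) = -z 3 := by
  simp [minkowski, Pi.single_apply]

lemma mink_zero_of (z : Fin 4 → ℝ) (h : ∀ w, minkowski z w = 0) : z = 0 := by
  funext i
  fin_cases i
  · simpa [mink_single0] using h (Pi.single 0 1)
  · have := h (Pi.single 1 1); rw [mink_single1] at this; simpa using this
  · have := h (Pi.single 2 1); rw [mink_single2] at this; simpa using this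
  · have := h (Pi.single 3 1); rw [mink_single3] at this; simpa using this

open ContinuousLinearMap in
lemma mink_deriv_zero {E : Type*} [NormedAddCommGroup E] [NormedSpace ℝ E]
    {f h : E → Fin 4 → ℝ} {f' h' : E →L[ℝ] (Fin 4 → ℝ)} {x : E}
    (hf : HasFDerivAt f f' x) (hh : HasFDerivAt h h' x)
    (h0 : ∀ y, minkowski (f y) (h y) = 0) (u : E) :
    minkowski (f' u) (h x) + minkowski (f x) (h' u) = 0 := by
  have Hf : ∀ i : Fin 4, HasFDerivAt (fun y => f y i) ((proj i).comp f') x :=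
    fun i => by exact (ContinuousLinearMap.proj i).hasFDerivAt.comp x hf
  have Hh : ∀ i : Fin 4, HasFDerivAt (fun y => h y i) ((proj i).comp h') x :=
    fun i => by exact (ContinuousLinearMap.proj i).hasFDerivAt.comp x hh
  have H := ((((Hf 0).mul (Hh 0)).sub ((Hf 1).mul (Hh 1))).sub
      ((Hf 2).mul (Hh 2))).sub ((Hf 3).mul (Hh 3))
  have H0 : HasFDerivAt (fun y => minkowski (f y) (h y)) (0 : E →L[ℝ] ℝ) x := by
    have he : (fun y => minkowski (f y) (h y)) = fun _ => (0:ℝ) := funext h0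
    rw [he]; exact hasFDerivAt_const 0 x
  have hD := H.unique H0
  have hu := ContinuousLinearMap.ext_iff.mp hD u
  simp only [ContinuousLinearMap.sub_apply, ContinuousLinearMap.add_apply,
    ContinuousLinearMap.smul_apply, ContinuousLinearMap.comp_apply,
    ContinuousLinearMap.proj_apply, smul_eq_mul, ContinuousLinearMap.zero_apply] at hu
  simp only [minkowski]
  linarith

open ContinuousLinearMap in
lemma mink_deriv_zero2 {E : Type*} [NormedAddCommGroup E] [NormedSpace ℝ E]
    {f h : E → Fin 4 → ℝ} {f' h' : E →L[ℝ] (Fin 4 → ℝ)} {c d : Fin 4 → ℝ} {x : E}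
    (hf : HasFDerivAt f f' x) (hh : HasFDerivAt h h' x)
    (h0 : ∀ y, minkowski (f y) c + minkowski (h y) d = 0) (u : E) :
    minkowski (f' u) c + minkowski (h' u) d = 0 := by
  have Hf : ∀ i : Fin 4, HasFDerivAt (fun y => f y i) ((proj i).comp f') x :=
    fun i => by exact (ContinuousLinearMap.proj i).hasFDerivAt.comp x hf
  have Hh : ∀ i : Fin 4, HasFDerivAt (fun y => h y i) ((proj i).comp h') x :=
    fun i => by exact (ContinuousLinearMap.proj i).hasFDerivAt.comp x hh
  have H := (((((Hf 0).mul_const (c 0)).sub ((Hf 1).mul_const (c 1))).sub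
      ((Hf 2).mul_const (c 2))).sub ((Hf 3).mul_const (c 3))).add
      (((((Hh 0).mul_const (d 0)).sub ((Hh 1).mul_const (d 1))).sub
      ((Hh 2).mul_const (d 2))).sub ((Hh 3).mul_const (d 3)))
  have H0 : HasFDerivAt (fun y => minkowski (f y) c + minkowski (h y) d) (0 : E →L[ℝ] ℝ) x := by
    have he : (fun y => minkowski (f y) c + minkowski (h y) d) = fun _ => (0:ℝ) := funext h0
    rw [he]; exact hasFDerivAt_const 0 x
  have hD := H.unique H0
  have hu := ContinuousLinearMap.ext_iff.mp hD u
  simp only [ContinuousLinearMap.sub_apply, ContinuousLinearMap.add_apply,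
    ContinuousLinearMap.smul_apply, ContinuousLinearMap.comp_apply,
    ContinuousLinearMap.proj_apply, smul_eq_mul, ContinuousLinearMap.zero_apply] at hu
  simp only [minkowski]
  linarith


lemma col_zero {a b c d : ℝ} (hnul : a * a - b * b - c * c - d * d = 0) (ha : a = 0) :
    b = 0 ∧ c = 0 ∧ d = 0 := by
  subst ha
  refine ⟨?_, ?_, ?_⟩ <;> nlinarith [sq_nonneg b, sq_nonneg c, sq_nonneg d]

open ContinuousLinearMap in
lemma mink_clm_zero (A : (Fin 4 → ℝ) →L[ℝ] (Fin 4 → ℝ))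
    (hanti : ∀ u w, minkowski (A u) w + minkowski u (A w) = 0)
    (hnn : ∀ u w, minkowski (A u) (A w) = 0) : A = 0 := by
  set e : Fin 4 → (Fin 4 → ℝ) := fun i => Pi.single i 1 with hedef
  have hd0 : A (e 0) 0 = 0 := by
    have := hanti (e 0) (e 0)
    rw [mink_single0, mink_comm, mink_single0] at this; linarith
  have hd1 : A (e 1) 1 = 0 := by
    have := hanti (e 1) (e 1)
    rw [mink_single1, mink_comm, mink_single1] at this; linarith
  have hd2 : A (e 2) 2 = 0 := by
    have := hanti (e 2) (e 2)
    rw [mink_single2, mink_comm, mink_single2] at this; linarith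
  have hd3 : A (e 3) 3 = 0 := by
    have := hanti (e 3) (e 3)
    rw [mink_single3, mink_comm, mink_single3] at this; linarith
  have n0 := hnn (e 0) (e 0)
  have n1 := hnn (e 1) (e 1)
  have n2 := hnn (e 2) (e 2)
  simp only [minkowski] at n0 n1 n2
  obtain ⟨h10, h20, h30⟩ := col_zero n0 hd0
  have r1 : A (e 1) 0 = 0 := by
    have := hanti (e 0) (e 1)
    rw [mink_single1, mink_comm (e 0), mink_single0] at this; linarith
  have r2 : A (e 2) 0 = 0 := by
    have := hanti (e 0) (e 2)
    rw [mink_single2, mink_comm (e 0), mink_single0] at this; linarith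
  have r3 : A (e 3) 0 = 0 := by
    have := hanti (e 0) (e 3)
    rw [mink_single3, mink_comm (e 0), mink_single0] at this; linarith
  obtain ⟨-, h21, h31⟩ := col_zero n1 r1
  have h12 : A (e 2) 1 = 0 := by
    have := hanti (e 1) (e 2)
    rw [mink_single2, mink_comm (e 1), mink_single1] at this; linarith
  have h13 : A (e 3) 1 = 0 := by
    have := hanti (e 1) (e 3)
    rw [mink_single3, mink_comm (e 1), mink_single1] at this; linarith
  obtain ⟨-, -, h32⟩ := col_zero n2 r2
  have h23 : A (e 3) 2 = 0 := by
    have := hanti (e 2) (e 3)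
    rw [mink_single3, mink_comm (e 2), mink_single2] at this; linarith
  have hcol0 : A (e 0) = 0 := by
    funext k; fin_cases k
    · simpa using hd0
    · simpa using h10
    · simpa using h20
    · simpa using h30
  have hcol1 : A (e 1) = 0 := by
    funext k; fin_cases k
    · simpa using r1
    · simpa using hd1
    · simpa using h21
    · simpa using h31
  have hcol2 : A (e 2) = 0 := by
    funext k; fin_cases k
    · simpa using r2
    · simpa using h12
    · simpa using hd2
    · simpa using h32
  have hcol3 : A (e 3) = 0 := by
    funext k; fin_cases k
    · simpa using r3
    · simpa using h13
    · simpa using h23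
    · simpa using hd3
  have hcol : ∀ i, A (e i) = 0 := by
    intro i; fin_cases i
    · exact hcol0
    · exact hcol1
    · exact hcol2
    · exact hcol3
  refine ContinuousLinearMap.ext fun v => ?_
  have hv : v = ∑ i, Pi.single i (v i) := (Finset.univ_sum_single v).symm
  rw [hv, map_sum]
  have hz : ∀ i : Fin 4, A (Pi.single i (v i)) = 0 := by
    intro i
    have hs : Pi.single i (v i) = v i • e i := by
      rw [hedef]
      simp [← Pi.single_smul]
    rw [hs, map_smul, hcol i, smul_zero]
  simp [hz]

/-- Any smooth Killing vector field of Minkowski space which is everywhere null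
is constant (a null translation). -/
theorem null_killing_is_null_translation (K : (Fin 4 → ℝ) → (Fin 4 → ℝ))
    (hsm : ContDiff ℝ (⊤ : ℕ∞) K)
    (hkill : ∀ x u w : Fin 4 → ℝ,
      minkowski (fderiv ℝ K x u) w + minkowski u (fderiv ℝ K x w) = 0)
    (hnull : ∀ x : Fin 4 → ℝ, minkowski (K x) (K x) = 0) :
    ∀ x y : Fin 4 → ℝ, K x = K y := by
  have hK : Differentiable ℝ K := hsm.differentiable (by simp)
  set g : (Fin 4 → ℝ) → (Fin 4 → ℝ) →L[ℝ] (Fin 4 → ℝ) := fderiv ℝ K with hgdef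
  have hgC : ContDiff ℝ (⊤ : ℕ∞) g := hsm.fderiv_right (by simp)
  have hg : Differentiable ℝ g := hgC.differentiable (by simp)
  -- Step 1 : the second derivative vanishes everywhere
  have hS0 : ∀ x, fderiv ℝ g x = 0 := by
    intro x
    set S := fderiv ℝ g x with hSdef
    have hSx : HasFDerivAt g S x := (hg x).hasFDerivAt
    have symm : ∀ v u : Fin 4 → ℝ, S v u = S u v :=
      second_derivative_symmetric (fun y => (hK y).hasFDerivAt) hSx
    have anti : ∀ v u w : Fin 4 → ℝ,
        minkowski (S v u) w + minkowski (S v w) u = 0 := by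
      intro v u w
      have hfd : HasFDerivAt (fun y => g y u)
          ((ContinuousLinearMap.apply ℝ (Fin 4 → ℝ) u).comp S) x := by
        exact (ContinuousLinearMap.apply ℝ (Fin 4 → ℝ) u).hasFDerivAt.comp x hSx
      have hhd : HasFDerivAt (fun y => g y w)
          ((ContinuousLinearMap.apply ℝ (Fin 4 → ℝ) w).comp S) x := by
        exact (ContinuousLinearMap.apply ℝ (Fin 4 → ℝ) w).hasFDerivAt.comp x hSx
      have h0 : ∀ y, minkowski (g y u) w + minkowski (g y w) u = 0 := by
        intro y
        have := hkill y u w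
        rwa [mink_comm u (fderiv ℝ K y w)] at this
      have := mink_deriv_zero2 hfd hhd h0 v
      simpa using this
    have T0 : ∀ v u w : Fin 4 → ℝ, minkowski (S v u) w = 0 := by
      intro v u w
      have h1 := anti v u w
      have h2 := anti w v u
      have h3 := anti u w v
      have s1 := congrArg (fun z => minkowski z u) (symm v w)
      have s2 := congrArg (fun z => minkowski z v) (symm w u)
      have s3 := congrArg (fun z => minkowski z w) (symm u v)
      linarith
    refine ContinuousLinearMap.ext fun v => ContinuousLinearMap.ext fun u => ?_
    have : S v u = 0 := mink_zero_of _ (T0 v u)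
    simpa using this
  -- Step 2 : the derivative g is a constant A
  have hgc : ∀ x y, g x = g y := fun x y => is_const_of_fderiv_eq_zero hg hS0 x y
  set A : (Fin 4 → ℝ) →L[ℝ] (Fin 4 → ℝ) := g 0 with hAdef
  have hAx : ∀ x, fderiv ℝ K x = A := fun x => hgc x 0
  -- Step 3 : minkowski (A u) (K x) = 0
  have hA1 : ∀ x u, minkowski (A u) (K x) = 0 := by
    intro x u
    have := mink_deriv_zero (hK x).hasFDerivAt (hK x).hasFDerivAt hnull u
    rw [hAx x, mink_comm (K x) (A u)] at this
    linarith
  -- Step 4 : minkowski (A u) (A w) = 0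
  have hA2 : ∀ u w, minkowski (A u) (A w) = 0 := by
    intro u w
    have h0 : ∀ y, minkowski (K y) (A w) + minkowski (K y) (0 : Fin 4 → ℝ) = 0 := by
      intro y
      rw [mink_zero_right, mink_comm, hA1 y w]
      ring
    have := mink_deriv_zero2 (hK 0).hasFDerivAt (hK 0).hasFDerivAt h0 u
    rw [hAx 0, mink_zero_right] at this
    linarith
  -- Step 5 : algebra, A = 0
  have hanti : ∀ u w, minkowski (A u) w + minkowski u (A w) = 0 := by
    intro u w
    have := hkill 0 u w
    rw [← hAdef] at this
    exact this
  have hA : A = 0 := mink_clm_zero A hanti hA2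
  have hK0 : ∀ x, fderiv ℝ K x = 0 := fun x => by rw [hAx x, hA]
  exact fun x y => is_const_of_fderiv_eq_zero hK hK0 x y
end
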